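/- Fix an integer k ≥ 1 and a real number a ≠ 0, and let r_ℓ and p_ℓ (0 ≤ ℓ ≤ k) be as in the eigenvector-branch setup. Suppose η, ξ_0, …, ξ_k, λ are real-analytic functions on an interval (−δ, δ) satisfying η(0) = k, λ(0) = k, ξ_0 ≡ a, Σ_{ℓ=0}^{k} p_ℓ(ε)ξ_ℓ(ε) = 1, and λ(ε)ξ_ℓ(ε) = r_ℓ(ε)ξ_ℓ(ε) + η(ε)p_ℓ(ε) for all ℓ and all ε ∈ (−δ,δ). Let η°(ε) = ( Σ_{ℓ=1}^{k} p_ℓ(ε)² / (r_0(ε) − r_ℓ(ε)) )^{−1}. Then η(ε) = η°(ε) + √(k!) · k · (1/a − a) · ε^k + O(ε^{k+1}) as ε → 0. In particular, if a = 1 or a = −1, then η(ε) = η°(ε) + O(ε^{k+1}). -/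

import Mathlib

/-!
For `ℓ ≥ 1` the eigen-equations solve to `ξ_ℓ = η p_ℓ / (λ - r_ℓ)`, so with
`S(μ) = Σ_{ℓ ≥ 1} p_ℓ² / (μ - r_ℓ)` the normalisation reads `p₀ a + η S(λ) = 1`, while the
`ℓ = 0` equation reads `η p₀ = (λ - r₀) a`. Together with the resolvent identity
`S(r₀) - S(λ) = (λ - r₀) T` these force `η - S(r₀)⁻¹ = p₀ · C` with `C` differentiable at `0`.
Since `p₀ = ε^k · (√k! + O(ε))` and, at `ε = 0`, only `p_k = 1` survives in the sums
(`S(r₀) = S(λ) = 1/k`, `T = 1/k²`), one gets `C(0) = k (1/a - a)`.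
-/

open scoped BigOperators

/-- `r_ℓ(ε) = (k−ℓ)(1−(k+ℓ)ε²) − ℓε²` (the rescaled eigenvalue `ε²λ_ℓ` under `n = 1/ε²`). -/
noncomputable def rFun (k ℓ : ℕ) (ε : ℝ) : ℝ :=
  ((k : ℝ) - ℓ) * (1 - ((k : ℝ) + ℓ) * ε ^ 2) - ℓ * ε ^ 2

/-- `p_ℓ(ε) = ε^{k−ℓ} √( k!(1−(2ℓ−1)ε²) / ( ℓ!(1−(ℓ−1)ε²)(1−ℓε²)⋯(1−(k−1)ε²) ) )`
(the overlap `‖P_ℓ|w⟩‖` under `n = 1/ε²`). -/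
noncomputable def pFun (k ℓ : ℕ) (ε : ℝ) : ℝ :=
  ε ^ (k - ℓ) *
    Real.sqrt ((k.factorial : ℝ) * (1 - (2 * (ℓ : ℝ) - 1) * ε ^ 2) /
      ((ℓ.factorial : ℝ) *
        ∏ j ∈ Finset.range (k - ℓ + 1), (1 - (((ℓ : ℝ) - 1) + j) * ε ^ 2)))

/-- `η°(ε) = ( Σ_{ℓ=1}^{k} p_ℓ(ε)² / (r_0(ε) − r_ℓ(ε)) )⁻¹`. -/
noncomputable def etaCirc (k : ℕ) (ε : ℝ) : ℝ :=
  (∑ ℓ ∈ Finset.Icc 1 k, pFun k ℓ ε ^ 2 / (rFun k 0 ε - rFun k ℓ ε))⁻¹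

open Filter Topology Asymptotics

section Secular

variable {s : Finset ℕ} {w r p ξ : ℕ → ℝ} {μ ν η : ℝ}

theorem sum_div_sub_sub_sum_div_sub (hν : ∀ ℓ ∈ s, ν - r ℓ ≠ 0) (hμ : ∀ ℓ ∈ s, μ - r ℓ ≠ 0) :
    ∑ ℓ ∈ s, w ℓ / (ν - r ℓ) - ∑ ℓ ∈ s, w ℓ / (μ - r ℓ)
      = (μ - ν) * ∑ ℓ ∈ s, w ℓ / ((ν - r ℓ) * (μ - r ℓ)) := by
  rw [← Finset.sum_sub_distrib, Finset.mul_sum]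
  refine Finset.sum_congr rfl fun ℓ hℓ => ?_
  field_simp [hν ℓ hℓ, hμ ℓ hℓ]
  ring

theorem sum_mul_eq_mul_sum_sq_div (hμ : ∀ ℓ ∈ s, μ - r ℓ ≠ 0)
    (heig : ∀ ℓ ∈ s, μ * ξ ℓ = r ℓ * ξ ℓ + η * p ℓ) :
    ∑ ℓ ∈ s, p ℓ * ξ ℓ = η * ∑ ℓ ∈ s, p ℓ ^ 2 / (μ - r ℓ) := by
  rw [Finset.mul_sum]
  refine Finset.sum_congr rfl fun ℓ hℓ => ?_
  have hξ : ξ ℓ = η * p ℓ / (μ - r ℓ) := by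
    rw [eq_div_iff (hμ ℓ hℓ)]
    linarith [heig ℓ hℓ]
  rw [hξ]
  ring

end Secular

theorem sub_inv_eq_of_secular {η μ a p₀ r₀ S S₀ T : ℝ} (ha : a ≠ 0) (hS : S ≠ 0) (hS₀ : S₀ ≠ 0)
    (h₁ : η * p₀ = (μ - r₀) * a) (h₂ : p₀ * a + η * S = 1) (h₃ : S₀ - S = (μ - r₀) * T) :
    η - S₀⁻¹ = p₀ * ((-a * S₀ + η / a * T) / (S * S₀)) := by
  field_simp
  linear_combination (-(η * T * S) - p₀ * a * T) * h₁ + (a * S + η * p₀ * T) * h₂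
    + (a * S * η + p₀ * a ^ 2) * h₃

noncomputable def pRoot (k ℓ : ℕ) (ε : ℝ) : ℝ :=
  Real.sqrt ((k.factorial : ℝ) * (1 - (2 * (ℓ : ℝ) - 1) * ε ^ 2) /
    ((ℓ.factorial : ℝ) * ∏ j ∈ Finset.range (k - ℓ + 1), (1 - (((ℓ : ℝ) - 1) + j) * ε ^ 2)))

theorem pFun_eq_pow_mul_pRoot (k ℓ : ℕ) (ε : ℝ) : pFun k ℓ ε = ε ^ (k - ℓ) * pRoot k ℓ ε := rfl

theorem pRoot_zero (k ℓ : ℕ) : pRoot k ℓ 0 = Real.sqrt (k.factorial / ℓ.factorial) := by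
  simp [pRoot]

theorem differentiableAt_pRoot (k ℓ : ℕ) : DifferentiableAt ℝ (pRoot k ℓ) 0 := by
  refine DifferentiableAt.sqrt ?_ (by simp [Nat.factorial_ne_zero])
  refine DifferentiableAt.div (by fun_prop) ?_ (by simp [Nat.factorial_ne_zero])
  exact (differentiableAt_const _).mul (DifferentiableAt.fun_finsetProd fun j _ => by fun_prop)

theorem differentiableAt_pFun (k ℓ : ℕ) : DifferentiableAt ℝ (pFun k ℓ) 0 :=
  (differentiableAt_pow _).mul (differentiableAt_pRoot k ℓ)

theorem pFun_zero_of_lt {k ℓ : ℕ} (h : ℓ < k) : pFun k ℓ 0 = 0 := by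
  rw [pFun_eq_pow_mul_pRoot, zero_pow (Nat.sub_ne_zero_of_lt h), zero_mul]

theorem pFun_self_zero (k : ℕ) : pFun k k 0 = 1 := by
  rw [pFun_eq_pow_mul_pRoot, pRoot_zero, Nat.sub_self, pow_zero, one_mul,
    div_self (by positivity), Real.sqrt_one]

theorem rFun_zero (k ℓ : ℕ) : rFun k ℓ 0 = k - ℓ := by
  simp [rFun]

theorem differentiableAt_rFun (k ℓ : ℕ) (ε : ℝ) : DifferentiableAt ℝ (rFun k ℓ) ε := by
  unfold rFun
  fun_prop

noncomputable def pSqSum (k : ℕ) (d : ℕ → ℝ → ℝ) (ε : ℝ) : ℝ :=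
  ∑ ℓ ∈ Finset.Icc 1 k, pFun k ℓ ε ^ 2 / d ℓ ε

theorem pSqSum_zero {k : ℕ} (hk : 1 ≤ k) (d : ℕ → ℝ → ℝ) : pSqSum k d 0 = 1 / d k 0 := by
  rw [pSqSum, Finset.sum_eq_single_of_mem k (Finset.mem_Icc.mpr ⟨hk, le_rfl⟩),
    pFun_self_zero, one_pow]
  intro ℓ hℓ hℓk
  rw [pFun_zero_of_lt (lt_of_le_of_ne (Finset.mem_Icc.mp hℓ).2 hℓk), zero_pow two_ne_zero,
    zero_div]

theorem differentiableAt_pSqSum {k : ℕ} {d : ℕ → ℝ → ℝ}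
    (hd : ∀ ℓ ∈ Finset.Icc 1 k, DifferentiableAt ℝ (d ℓ) 0)
    (hd₀ : ∀ ℓ ∈ Finset.Icc 1 k, d ℓ 0 ≠ 0) : DifferentiableAt ℝ (pSqSum k d) 0 :=
  DifferentiableAt.fun_sum fun ℓ hℓ => ((differentiableAt_pFun k ℓ).pow 2).div (hd ℓ hℓ) (hd₀ ℓ hℓ)

noncomputable def rGap (k : ℕ) (μ : ℝ → ℝ) (ℓ : ℕ) (ε : ℝ) : ℝ :=
  μ ε - rFun k ℓ ε

theorem rFun_zero_zero (k : ℕ) : rFun k 0 0 = k := by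
  simp [rFun_zero]

section Gap

variable {k : ℕ} {μ : ℝ → ℝ}

theorem rGap_zero (hμ₀ : μ 0 = k) (ℓ : ℕ) : rGap k μ ℓ 0 = ℓ := by
  rw [rGap, rFun_zero, hμ₀]
  ring

theorem differentiableAt_rGap (hμ : DifferentiableAt ℝ μ 0) (ℓ : ℕ) :
    DifferentiableAt ℝ (rGap k μ ℓ) 0 :=
  hμ.sub (differentiableAt_rFun k ℓ 0)

theorem rGap_zero_ne_zero (hμ₀ : μ 0 = k) {ℓ : ℕ} (hℓ : ℓ ∈ Finset.Icc 1 k) :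
    rGap k μ ℓ 0 ≠ 0 := by
  rw [rGap_zero hμ₀]
  exact Nat.cast_ne_zero.mpr (Nat.one_le_iff_ne_zero.mp (Finset.mem_Icc.mp hℓ).1)

theorem pSqSum_rGap_zero (hk : 1 ≤ k) (hμ₀ : μ 0 = k) : pSqSum k (rGap k μ) 0 = 1 / k := by
  rw [pSqSum_zero hk, rGap_zero hμ₀]

theorem differentiableAt_pSqSum_rGap (hμ : DifferentiableAt ℝ μ 0) (hμ₀ : μ 0 = k) :
    DifferentiableAt ℝ (pSqSum k (rGap k μ)) 0 :=
  differentiableAt_pSqSum (fun ℓ _ => differentiableAt_rGap hμ ℓ)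
    (fun _ hℓ => rGap_zero_ne_zero hμ₀ hℓ)

theorem eventually_rGap_ne_zero_and_pSqSum_ne_zero (hk : 1 ≤ k) (hμ : DifferentiableAt ℝ μ 0)
    (hμ₀ : μ 0 = k) :
    ∀ᶠ ε in 𝓝 0, (∀ ℓ ∈ Finset.Icc 1 k, rGap k μ ℓ ε ≠ 0) ∧ pSqSum k (rGap k μ) ε ≠ 0 := by
  refine ((Finset.eventually_all _).mpr fun ℓ hℓ => ?_).and ?_
  · exact (differentiableAt_rGap hμ ℓ).continuousAt.eventually_ne (rGap_zero_ne_zero hμ₀ hℓ)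
  · refine (differentiableAt_pSqSum_rGap hμ hμ₀).continuousAt.eventually_ne ?_
    rw [pSqSum_rGap_zero hk hμ₀]
    positivity

end Gap

theorem etaCirc_eq_inv_pSqSum (k : ℕ) (ε : ℝ) :
    etaCirc k ε = (pSqSum k (rGap k (rFun k 0)) ε)⁻¹ := rfl

noncomputable def branchCorrection (k : ℕ) (a : ℝ) (η lam : ℝ → ℝ) (ε : ℝ) : ℝ :=
  pRoot k 0 ε * ((-a * pSqSum k (rGap k (rFun k 0)) ε
      + η ε / a * pSqSum k (rGap k (rFun k 0) * rGap k lam) ε)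
    / (pSqSum k (rGap k lam) ε * pSqSum k (rGap k (rFun k 0)) ε))

section Branch

variable {k : ℕ} {a : ℝ} {η lam : ℝ → ℝ}

theorem branchCorrection_zero (hk : 1 ≤ k) (hη₀ : η 0 = k) (hlam₀ : lam 0 = k) :
    branchCorrection k a η lam 0 = Real.sqrt k.factorial * k * (1 / a - a) := by
  have hT : pSqSum k (rGap k (rFun k 0) * rGap k lam) 0 = 1 / (k * k) := by
    rw [pSqSum_zero hk, Pi.mul_apply, Pi.mul_apply, rGap_zero (rFun_zero_zero k),
      rGap_zero hlam₀]
  have hk0 : (k : ℝ) ≠ 0 := by positivity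
  rw [branchCorrection, hT, pSqSum_rGap_zero hk (rFun_zero_zero k), pSqSum_rGap_zero hk hlam₀,
    pRoot_zero, hη₀, Nat.factorial_zero, Nat.cast_one, div_one]
  field_simp
  ring

theorem differentiableAt_branchCorrection (hk : 1 ≤ k) (hη : DifferentiableAt ℝ η 0)
    (hlam : DifferentiableAt ℝ lam 0) (hlam₀ : lam 0 = k) :
    DifferentiableAt ℝ (branchCorrection k a η lam) 0 := by
  have hS₀ := differentiableAt_pSqSum_rGap (differentiableAt_rFun k 0 0) (rFun_zero_zero k)
  have hS := differentiableAt_pSqSum_rGap hlam hlam₀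
  have hT : DifferentiableAt ℝ (pSqSum k (rGap k (rFun k 0) * rGap k lam)) 0 :=
    differentiableAt_pSqSum
      (fun ℓ _ => (differentiableAt_rGap (differentiableAt_rFun k 0 0) ℓ).mul
        (differentiableAt_rGap hlam ℓ))
      (fun _ hℓ => mul_ne_zero (rGap_zero_ne_zero (rFun_zero_zero k) hℓ)
        (rGap_zero_ne_zero hlam₀ hℓ))
  refine (differentiableAt_pRoot k 0).mul
    ((((differentiableAt_const _).mul hS₀).add ((hη.div_const a).mul hT)).div (hS.mul hS₀) ?_)
  rw [pSqSum_rGap_zero hk hlam₀, pSqSum_rGap_zero hk (rFun_zero_zero k)]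
  positivity

end Branch

theorem eta_sub_etaCirc_eventuallyEq {k : ℕ} (hk : 1 ≤ k) {a : ℝ} (ha : a ≠ 0)
    {η lam : ℝ → ℝ} {ξ : ℕ → ℝ → ℝ} (hlam : DifferentiableAt ℝ lam 0) (hlam₀ : lam 0 = k)
    (hξ₀ : ∀ᶠ ε in 𝓝 0, ξ 0 ε = a)
    (hnorm : ∀ᶠ ε in 𝓝 0, ∑ ℓ ∈ Finset.range (k + 1), pFun k ℓ ε * ξ ℓ ε = 1)
    (heig : ∀ᶠ ε in 𝓝 0, ∀ ℓ ≤ k,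
      lam ε * ξ ℓ ε = rFun k ℓ ε * ξ ℓ ε + η ε * pFun k ℓ ε) :
    (fun ε => η ε - etaCirc k ε) =ᶠ[𝓝 0] fun ε => ε ^ k * branchCorrection k a η lam ε := by
  filter_upwards [hξ₀, hnorm, heig,
    eventually_rGap_ne_zero_and_pSqSum_ne_zero hk (differentiableAt_rFun k 0 0) (rFun_zero_zero k),
    eventually_rGap_ne_zero_and_pSqSum_ne_zero hk hlam hlam₀]
    with ε hξ₀ε hnormε heigε ⟨hr, hS₀⟩ ⟨hl, hS⟩
  have heig₀ : η ε * pFun k 0 ε = (lam ε - rFun k 0 ε) * a := by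
    linarith [hξ₀ε ▸ heigε 0 k.zero_le]
  have hnorm' : pFun k 0 ε * a + η ε * pSqSum k (rGap k lam) ε = 1 := by
    have hsplit : Finset.range (k + 1) = insert 0 (Finset.Icc 1 k) := by
      ext ℓ
      simp only [Finset.mem_range, Finset.mem_insert, Finset.mem_Icc]
      omega
    rw [hsplit, Finset.sum_insert (by simp), hξ₀ε,
      sum_mul_eq_mul_sum_sq_div hl fun ℓ hℓ => heigε ℓ (Finset.mem_Icc.mp hℓ).2] at hnormε
    exact hnormε
  have hresolvent : pSqSum k (rGap k (rFun k 0)) ε - pSqSum k (rGap k lam) ε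
      = (lam ε - rFun k 0 ε) * pSqSum k (rGap k (rFun k 0) * rGap k lam) ε :=
    sum_div_sub_sub_sum_div_sub hr hl
  rw [etaCirc_eq_inv_pSqSum, sub_inv_eq_of_secular ha hS hS₀ heig₀ hnorm' hresolvent,
    branchCorrection, pFun_eq_pow_mul_pRoot, Nat.sub_zero]
  ring

theorem isBigO_pow_mul_sub_of_differentiableAt {𝕜 : Type*} [NontriviallyNormedField 𝕜]
    {F : 𝕜 → 𝕜} (hF : DifferentiableAt 𝕜 F 0) (k : ℕ) :
    (fun x => x ^ k * F x - F 0 * x ^ k) =O[𝓝 0] fun x => x ^ (k + 1) := by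
  have h := (isBigO_refl (fun x : 𝕜 => x ^ k) (𝓝 0)).mul (by simpa using hF.isBigO_sub)
  simpa only [mul_sub, pow_succ, mul_comm (F 0)] using h

open Asymptotics in
theorem eta_branch_expansion_general (k : ℕ) (hk : 1 ≤ k) (a : ℝ) (ha : a ≠ 0)
    (δ : ℝ) (hδ : 0 < δ) (η : ℝ → ℝ) (ξ : ℕ → ℝ → ℝ) (lam : ℝ → ℝ)
    (hη : ∀ x ∈ Set.Ioo (-δ) δ, AnalyticAt ℝ η x)
    (hlam : ∀ x ∈ Set.Ioo (-δ) δ, AnalyticAt ℝ lam x)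
    (hη0 : η 0 = k) (hlam0 : lam 0 = k)
    (hξ0 : ∀ ε ∈ Set.Ioo (-δ) δ, ξ 0 ε = a)
    (hnorm : ∀ ε ∈ Set.Ioo (-δ) δ,
      (∑ ℓ ∈ Finset.range (k + 1), pFun k ℓ ε * ξ ℓ ε) = 1)
    (heig : ∀ ε ∈ Set.Ioo (-δ) δ, ∀ ℓ ≤ k,
      lam ε * ξ ℓ ε = rFun k ℓ ε * ξ ℓ ε + η ε * pFun k ℓ ε) :
    ((fun ε : ℝ => η ε - (etaCirc k ε + Real.sqrt (k.factorial) * k * (1 / a - a) * ε ^ k))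
        =O[nhds 0] fun ε : ℝ => ε ^ (k + 1))
    ∧ (a = 1 ∨ a = -1 →
        (fun ε : ℝ => η ε - etaCirc k ε) =O[nhds 0] fun ε : ℝ => ε ^ (k + 1)) := by
  have h₀ : (0 : ℝ) ∈ Set.Ioo (-δ) δ := ⟨neg_neg_of_pos hδ, hδ⟩
  have hU : ∀ᶠ ε in 𝓝 (0 : ℝ), ε ∈ Set.Ioo (-δ) δ := Ioo_mem_nhds h₀.1 h₀.2
  have hηd := (hη 0 h₀).differentiableAt
  have hlamd := (hlam 0 h₀).differentiableAt
  have hexp := eta_sub_etaCirc_eventuallyEq hk ha hlamd hlam0 (hU.mono hξ0) (hU.mono hnorm)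
    (hU.mono heig)
  have hmain : (fun ε : ℝ => η ε - (etaCirc k ε + Real.sqrt k.factorial * k * (1 / a - a) * ε ^ k))
      =O[𝓝 0] fun ε : ℝ => ε ^ (k + 1) := by
    refine EventuallyEq.trans_isBigO (hexp.mono fun ε hε => ?_)
      (isBigO_pow_mul_sub_of_differentiableAt
      (differentiableAt_branchCorrection (a := a) hk hηd hlamd hlam0) k)
    simp only [branchCorrection_zero (a := a) hk hη0 hlam0] at hε ⊢
    linear_combination hε
  refine ⟨hmain, fun hunit => ?_⟩
  have hzero : 1 / a - a = 0 := by rcases hunit with rfl | rfl <;> norm_num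
  simpa only [hzero, mul_zero, zero_mul, add_zero] using hmain

open Asymptotics in
/-- any real-analytic eigenvector branch as in the setup (with `ξ_0 ≡ a`,
`η(0) = λ(0) = k`) satisfies `η(ε) = η°(ε) + √(k!)·k·(1/a − a)·ε^k + O(ε^{k+1})`;
in particular `η(ε) = η°(ε) + O(ε^{k+1})` when `a = ±1`. -/
theorem eta_branch_expansion (k : ℕ) (hk : 1 ≤ k) (a : ℝ) (ha : a ≠ 0)
    (δ : ℝ) (hδ : 0 < δ) (η : ℝ → ℝ) (ξ : ℕ → ℝ → ℝ) (lam : ℝ → ℝ)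
    (hη : ∀ x ∈ Set.Ioo (-δ) δ, AnalyticAt ℝ η x)
    (hξ : ∀ ℓ ≤ k, ∀ x ∈ Set.Ioo (-δ) δ, AnalyticAt ℝ (ξ ℓ) x)
    (hlam : ∀ x ∈ Set.Ioo (-δ) δ, AnalyticAt ℝ lam x)
    (hη0 : η 0 = k) (hlam0 : lam 0 = k)
    (hξ0 : ∀ ε ∈ Set.Ioo (-δ) δ, ξ 0 ε = a)
    (hnorm : ∀ ε ∈ Set.Ioo (-δ) δ,
      (∑ ℓ ∈ Finset.range (k + 1), pFun k ℓ ε * ξ ℓ ε) = 1)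
    (heig : ∀ ε ∈ Set.Ioo (-δ) δ, ∀ ℓ ≤ k,
      lam ε * ξ ℓ ε = rFun k ℓ ε * ξ ℓ ε + η ε * pFun k ℓ ε) :
    ((fun ε : ℝ => η ε - (etaCirc k ε + Real.sqrt (k.factorial) * k * (1 / a - a) * ε ^ k))
        =O[nhds 0] fun ε : ℝ => ε ^ (k + 1))
    ∧ (a = 1 ∨ a = -1 →
        (fun ε : ℝ => η ε - etaCirc k ε) =O[nhds 0] fun ε : ℝ => ε ^ (k + 1)) :=
  eta_branch_expansion_general k hk a ha δ hδ η ξ lam hη hlam hη0 hlam0 hξ0 hnorm heig
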